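/- Let f = {f_t}_{t≥1} be an anonymous age-based acknowledgment-based protocol for n players that is in equilibrium and has finite expected latency E[T_i | h_{i,0}, f] < ∞ for each player. Then there exists a finite positive integer τ* such that: (a) f_{τ*} = 1; (b) f_{τ*−1} < 1; and (c) there exist τ₁ < τ₂ < ⋯ < τ_{n−1} < τ* with f_{τ_j} < 1 for all j = 1, …, n−1. -/

import Mathlib

open scoped ENNReal

namespace Contention

/-- An acknowledgment-based protocol: maps a player's personal transmission history
(the list of her own past transmission indicators, oldest slot first) to the
probability of transmitting in the next slot. -/
abbrev Protocol : Type := List Bool → ℝ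

/-- A protocol is valid if it always prescribes a probability in `[0,1]`. -/
def ValidProtocol (f : Protocol) : Prop := ∀ h : List Bool, 0 ≤ f h ∧ f h ≤ 1

/-- A joint transmission history: the list of transmission vectors, oldest slot first. -/
abbrev Hist (n : ℕ) : Type := List (Fin n → Bool)

/-- The personal transmission history of player `i` extracted from a joint history. -/
def personal {n : ℕ} (h : Hist n) (i : Fin n) : List Bool := h.map fun v => v i

/-- Player `i` transmits alone (hence successfully) in the slot with transmission vector `v`. -/
def alone {n : ℕ} (v : Fin n → Bool) (i : Fin n) : Prop :=
  v i = true ∧ ∀ j : Fin n, j ≠ i → v j = false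

instance {n : ℕ} (v : Fin n → Bool) (i : Fin n) : Decidable (alone v i) := by
  unfold alone; infer_instance

/-- Player `i` is still pending after joint history `h` (she never transmitted alone). -/
def pending {n : ℕ} (h : Hist n) (i : Fin n) : Prop := ∀ v ∈ h, ¬ alone v i

instance {n : ℕ} (h : Hist n) (i : Fin n) : Decidable (pending h i) := by
  unfold pending; infer_instance

/-- Probability that the next slot has transmission vector `v`, given joint history `h`:
each pending player transmits independently with the probability her protocol assigns to
her personal history, and players that already succeeded stay quiet. -/
noncomputable def stepProb {n : ℕ} (F : Fin n → Protocol) (h : Hist n) (v : Fin n → Bool) : ℝ :=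
  ∏ i : Fin n,
    if pending h i then
      (if v i = true then F i (personal h i) else 1 - F i (personal h i))
    else
      (if v i = true then 0 else 1)

/-- Probability that, starting after joint history `h`, the next `e.length` slots produce
exactly the extension `e`. -/
noncomputable def contProb {n : ℕ} (F : Fin n → Protocol) (h e : Hist n) : ℝ :=
  ∏ t ∈ Finset.range e.length, stepProb F (h ++ e.take t) (e.getD t fun _ => false)

/-- Probability that the first `h.length` slots produce exactly the joint history `h`. -/
noncomputable def histProb {n : ℕ} (F : Fin n → Protocol) (h : Hist n) : ℝ := contProb F [] h

/-- Conditional probability, given joint history `h`, that player `i` is still pending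
after `s` further slots. -/
noncomputable def condPendProb {n : ℕ} (F : Fin n → Protocol) (h : Hist n) (i : Fin n)
    (s : ℕ) : ℝ :=
  ∑ e : Fin s → Fin n → Bool,
    if pending (h ++ List.ofFn e) i then contProb F h (List.ofFn e) else 0

/-- Conditional expected latency `E[Tᵢ | h]` of player `i` given joint history `h`
(`Tᵢ` is the first slot in which `i` transmits alone), computed via
`E[Tᵢ | h] = ∑_{s ≥ 0} Pr(Tᵢ > s | h)`; for `s ≤ h.length` the event `Tᵢ > s` is
determined by `h`, and for larger `s` its probability is `condPendProb`. -/
noncomputable def condLatency {n : ℕ} (F : Fin n → Protocol) (h : Hist n) (i : Fin n) : ℝ≥0∞ :=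
  ∑' s : ℕ,
    if s ≤ h.length then (if pending (h.take s) i then 1 else 0)
    else ENNReal.ofReal (condPendProb F h i (s - h.length))

/-- Conditional expected number of further slots until player `i` succeeds, given joint
history `h` (the slot of the successful transmission itself is counted). -/
noncomputable def condRemaining {n : ℕ} (F : Fin n → Protocol) (h : Hist n) (i : Fin n) : ℝ≥0∞ :=
  ∑' s : ℕ, ENNReal.ofReal (condPendProb F h i s)

/-- A profile of protocols is in equilibrium if after no joint history (arising with
positive probability) can a player strictly decrease her conditional expected latency
by unilaterally switching to another (valid) protocol. -/
def IsEquilibrium {n : ℕ} (F : Fin n → Protocol) : Prop :=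
  ∀ i : Fin n, ∀ h : Hist n, 0 < histProb F h →
    ∀ g : Protocol, ValidProtocol g →
      condLatency F h i ≤ condLatency (Function.update F i g) h i

end Contention

namespace Contention

/-- An age-based protocol: the transmission probability in slot `t` (that is, after a
personal history of length `t − 1`) is `p t`, depending only on the time `t ≥ 1`. -/
def ageProtocol (p : ℕ → ℝ) : Protocol := fun h => p (h.length + 1)

end Contention

/-!
Finite expected latencies make the expected number of pending players tend to `0`, so some
history of positive probability ends with every player done; since at most one player succeeds
per slot, one of its prefixes leaves exactly one player pending. In equilibrium that player
transmits with probability `1` in the next slot, for otherwise always transmitting would strictly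
shorten her latency. Each of the other `n - 1` players succeeded in its own earlier slot, in which
the last player stayed quiet with positive probability, so the protocol is `< 1` there; `τ` is the
first slot after the last of these in which the protocol is `1`.
-/

lemma exists_pos_eq_zero_of_sum_mul_lt {ι : Type*} [Fintype ι] {w : ι → ℝ} {c : ι → ℕ}
    (hw : ∀ x, 0 ≤ w x) (hsum : ∑ x, w x = 1) (hlt : ∑ x, w x * c x < 1) :
    ∃ x, 0 < w x ∧ c x = 0 := by
  by_contra! hcon
  have hle : ∀ x, w x ≤ w x * c x := fun x => by
    rcases (hw x).eq_or_lt with hx | hx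
    · simp [← hx]
    · exact le_mul_of_one_le_right hx.le (by exact_mod_cast Nat.one_le_iff_ne_zero.2 (hcon x hx))
  linarith [Finset.sum_le_sum fun x (_ : x ∈ Finset.univ) => hle x]

lemma Nat.exists_eq_one_of_le_succ_add_one {f : ℕ → ℕ} (h0 : 1 ≤ f 0)
    (hstep : ∀ m, f m ≤ f (m + 1) + 1) {m : ℕ} (hm : f m ≤ 1) : ∃ k, f k = 1 := by
  induction m with
  | zero => exact ⟨0, by omega⟩
  | succ m ih =>
    by_cases hfm : f m ≤ 1
    · exact ih hfm
    · exact ⟨m + 1, by have := hstep m; omega⟩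

namespace Contention

open Finset Topology

variable {n : ℕ}

section Histories

lemma pending_of_append {a b : Hist n} {i : Fin n} (h : pending (a ++ b) i) : pending a i :=
  fun v hv => h v (List.mem_append_left _ hv)

lemma pending_append_singleton_iff {l : Hist n} {v : Fin n → Bool} {i : Fin n} :
    pending (l ++ [v]) i ↔ pending l i ∧ ¬ alone v i := by
  simp [pending, or_imp, forall_and]

lemma alone.unique {v : Fin n → Bool} {i j : Fin n} (hi : alone v i) (hj : alone v j) :
    i = j := by
  by_contra hne
  simpa [hj.2 i hne] using hi.1

lemma not_alone_quiet (i : Fin n) : ¬ alone (fun _ => false) i := fun h => by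
  simpa using h.1

def pendingCount (h : Hist n) : ℕ := #{i | pending h i}

lemma pendingCount_nil : pendingCount ([] : Hist n) = n := by
  simp [pendingCount, pending]

lemma pendingCount_le_append_singleton (l : Hist n) (v : Fin n → Bool) :
    pendingCount l ≤ pendingCount (l ++ [v]) + 1 := by
  have hleft : ({i | pending l i} : Finset (Fin n)) \ ({i | pending (l ++ [v]) i} : Finset _) ⊆
      ({i | alone v i} : Finset _) := by
    intro i
    simp only [mem_sdiff, mem_filter, mem_univ, true_and, pending_append_singleton_iff]
    tauto
  have hone : #({i | alone v i} : Finset (Fin n)) ≤ 1 :=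
    card_le_one.2 fun a ha b hb => (mem_filter.1 ha).2.unique (mem_filter.1 hb).2
  have := card_le_card_sdiff_add_card (s := ({i | pending l i} : Finset (Fin n)))
    (t := {i | pending (l ++ [v]) i})
  have := card_le_card hleft
  unfold pendingCount
  omega

lemma pendingCount_take_le_take_succ (l : Hist n) (m : ℕ) :
    pendingCount (l.take m) ≤ pendingCount (l.take (m + 1)) + 1 := by
  rw [List.take_add_one]
  cases l[m]? with
  | none => simp
  | some v => exact pendingCount_le_append_singleton _ v

lemma exists_take_pendingCount_eq_one (hn : 1 ≤ n) {l : Hist n} (hl : pendingCount l = 0) :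
    ∃ m, pendingCount (l.take m) = 1 :=
  Nat.exists_eq_one_of_le_succ_add_one (f := fun m => pendingCount (l.take m))
    (by simpa [pendingCount_nil] using hn) (pendingCount_take_le_take_succ l)
    (m := l.length) (by simp [hl])

end Histories

section Probabilities

variable {F : Fin n → Protocol}

lemma stepProb_nonneg (hF : ∀ i, ValidProtocol (F i)) (h : Hist n) (v : Fin n → Bool) :
    0 ≤ stepProb F h v := by
  refine prod_nonneg fun i _ => ?_
  have := hF i (personal h i)
  split_ifs <;> linarith

lemma sum_stepProb (F : Fin n → Protocol) (h : Hist n) :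
    ∑ v : Fin n → Bool, stepProb F h v = 1 := by
  unfold stepProb
  rw [← Fintype.prod_sum (fun i (b : Bool) => if pending h i then
    (if b = true then F i (personal h i) else 1 - F i (personal h i)) else if b = true then 0 else 1)]
  refine prod_eq_one fun i _ => ?_
  by_cases hp : pending h i <;> simp [hp]

@[simp]
lemma contProb_nil (F : Fin n → Protocol) (h : Hist n) : contProb F h [] = 1 := by
  simp [contProb]

lemma contProb_cons (F : Fin n → Protocol) (h : Hist n) (v : Fin n → Bool) (l : Hist n) :
    contProb F h (v :: l) = stepProb F h v * contProb F (h ++ [v]) l := by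
  unfold contProb
  rw [List.length_cons, prod_range_succ', mul_comm]
  simp

lemma contProb_append (F : Fin n → Protocol) (h a b : Hist n) :
    contProb F h (a ++ b) = contProb F h a * contProb F (h ++ a) b := by
  induction a generalizing h with
  | nil => simp
  | cons v a ih => simp [contProb_cons, ih, mul_assoc]

lemma contProb_nonneg (hF : ∀ i, ValidProtocol (F i)) (h e : Hist n) : 0 ≤ contProb F h e :=
  prod_nonneg fun _ _ => stepProb_nonneg hF _ _

lemma histProb_take_pos (hF : ∀ i, ValidProtocol (F i)) {l : Hist n}
    (hl : 0 < histProb F l) (m : ℕ) : 0 < histProb F (l.take m) := by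
  unfold histProb at *
  rw [← List.take_append_drop m l, contProb_append] at hl
  exact pos_of_mul_pos_left hl (contProb_nonneg hF _ _)

lemma sum_ofFn_succ {M : Type*} [AddCommMonoid M] {α : Type*} [Fintype α] {s : ℕ}
    (A : List α → M) :
    ∑ e : Fin (s + 1) → α, A (List.ofFn e) = ∑ v : α, ∑ e : Fin s → α, A (v :: List.ofFn e) := by
  rw [← Fintype.sum_prod_type', ← (Fin.consEquiv fun _ => α).sum_comp]
  simp [Fin.consEquiv, List.ofFn_succ]

lemma sum_contProb_ofFn (F : Fin n → Protocol) (h : Hist n) (s : ℕ) :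
    ∑ e : Fin s → Fin n → Bool, contProb F h (List.ofFn e) = 1 := by
  induction s generalizing h with
  | zero => simp
  | succ s ih =>
    simp only [sum_ofFn_succ fun l => contProb F h l, contProb_cons, ← mul_sum, ih, mul_one,
      sum_stepProb]

lemma condPendProb_nonneg (hF : ∀ i, ValidProtocol (F i)) (h : Hist n) (i : Fin n) (s : ℕ) :
    0 ≤ condPendProb F h i s :=
  sum_nonneg fun _ _ => by split_ifs <;> simp [contProb_nonneg hF]

lemma sum_condPendProb (F : Fin n → Protocol) (h : Hist n) (s : ℕ) :
    ∑ i, condPendProb F h i s =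
      ∑ e : Fin s → Fin n → Bool, contProb F h (List.ofFn e) * pendingCount (h ++ List.ofFn e) := by
  simp only [condPendProb, pendingCount]
  rw [sum_comm]
  refine sum_congr rfl fun e _ => ?_
  rw [card_filter, Nat.cast_sum, mul_sum]
  refine sum_congr rfl fun i _ => ?_
  split_ifs <;> simp

lemma condLatency_eq (F : Fin n → Protocol) (h : Hist n) (i : Fin n) :
    condLatency F h i = (∑ s ∈ range (h.length + 1), if pending (h.take s) i then 1 else 0) +
      ∑' m, ENNReal.ofReal (condPendProb F h i (m + 1)) := by
  rw [condLatency, ← ENNReal.summable.sum_add_tsum_nat_add' (k := h.length + 1)]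
  congr 1
  · exact sum_congr rfl fun s hs => if_pos (Nat.lt_succ_iff.1 (mem_range.1 hs))
  · refine tsum_congr fun m => ?_
    rw [if_neg (by omega)]
    congr 2
    omega

lemma stepProb_eq_zero_of_not_alone {h : Hist n} {i : Fin n} {v : Fin n → Bool}
    (hpend : pending h i) (hothers : ∀ j ≠ i, ¬ pending h j) (hFi : F i (personal h i) = 1)
    (hv : ¬ alone v i) : stepProb F h v = 0 := by
  by_cases hvi : v i = true
  · obtain ⟨j, hji, hvj⟩ : ∃ j ≠ i, v j = true := by
      simpa [alone, hvi] using hv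
    exact prod_eq_zero (mem_univ j) (by simp [hothers j hji, hvj])
  · exact prod_eq_zero (mem_univ i) (by simp [hpend, hvi, hFi])

lemma condPendProb_succ_eq_zero {h : Hist n} {i : Fin n} (hpend : pending h i)
    (hothers : ∀ j ≠ i, ¬ pending h j) (hFi : F i (personal h i) = 1) (m : ℕ) :
    condPendProb F h i (m + 1) = 0 := by
  refine sum_eq_zero fun e _ => ?_
  split_ifs with hpe
  · have hfirst : ¬ alone (e 0) i := hpe _ (by simp [List.ofFn_succ])
    rw [List.ofFn_succ, contProb_cons, stepProb_eq_zero_of_not_alone hpend hothers hFi hfirst,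
      zero_mul]
  · rfl

lemma stepProb_quiet {h : Hist n} {i : Fin n} (hpend : pending h i)
    (hothers : ∀ j ≠ i, ¬ pending h j) :
    stepProb F h (fun _ => false) = 1 - F i (personal h i) := by
  rw [stepProb, prod_eq_single i (fun j _ hji => by simp [hothers j hji]) (by simp)]
  simp [hpend]

lemma stepProb_le_condPendProb_one (hF : ∀ i, ValidProtocol (F i)) {h : Hist n} {i : Fin n}
    {v : Fin n → Bool} (hv : pending (h ++ [v]) i) : stepProb F h v ≤ condPendProb F h i 1 := by
  have hnonneg : ∀ e : Fin 1 → Fin n → Bool,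
      0 ≤ if pending (h ++ List.ofFn e) i then contProb F h (List.ofFn e) else 0 :=
    fun e => by split_ifs <;> simp [contProb_nonneg hF]
  calc stepProb F h v
      = if pending (h ++ List.ofFn fun _ : Fin 1 => v) i then
          contProb F h (List.ofFn fun _ : Fin 1 => v) else 0 := by simp [hv, contProb_cons]
    _ ≤ condPendProb F h i 1 := single_le_sum (fun e _ => hnonneg e) (mem_univ _)

/-- The equilibrium condition forces a sole pending player to transmit with certainty:
otherwise she could deviate to always transmitting and succeed in the very next slot. -/
lemma apply_eq_one_of_sole_pending (hF : ∀ i, ValidProtocol (F i)) (hEq : IsEquilibrium F)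
    {h : Hist n} {i : Fin n} (hpos : 0 < histProb F h) (hpend : pending h i)
    (hothers : ∀ j ≠ i, ¬ pending h j) : F i (personal h i) = 1 := by
  set elapsed : ℝ≥0∞ := ∑ s ∈ range (h.length + 1), if pending (h.take s) i then 1 else 0
  have helapsed : elapsed ≠ ⊤ := ENNReal.sum_ne_top.2 fun _ _ => by split_ifs <;> simp
  have hdev : ∀ m, condPendProb (Function.update F i fun _ => 1) h i (m + 1) = 0 :=
    condPendProb_succ_eq_zero hpend hothers (by simp)
  have htail : ∑' m, ENNReal.ofReal (condPendProb F h i (m + 1)) = 0 := by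
    have hle := hEq i h hpos (fun _ => 1) fun _ => ⟨zero_le_one, le_rfl⟩
    rw [condLatency_eq, condLatency_eq] at hle
    simp only [hdev, ENNReal.ofReal_zero, tsum_zero] at hle
    exact nonpos_iff_eq_zero.1 (ENNReal.le_of_add_le_add_left helapsed hle)
  have hone : condPendProb F h i 1 ≤ 0 := by
    simpa using ENNReal.tsum_eq_zero.1 htail 0
  have hquiet := stepProb_le_condPendProb_one hF
    (pending_append_singleton_iff.2 ⟨hpend, not_alone_quiet i⟩)
  rw [stepProb_quiet hpend hothers] at hquiet
  linarith [(hF i (personal h i)).2]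

lemma tendsto_condPendProb (hF : ∀ i, ValidProtocol (F i)) {h : Hist n} {i : Fin n}
    (hfin : condLatency F h i ≠ ⊤) :
    Filter.Tendsto (condPendProb F h i) Filter.atTop (𝓝 0) := by
  rw [condLatency_eq] at hfin
  have htail := ENNReal.tendsto_atTop_zero_of_tsum_ne_top (ENNReal.add_ne_top.1 hfin).2
  have hreal := (ENNReal.tendsto_toReal ENNReal.zero_ne_top).comp htail
  simp only [Function.comp_def, ENNReal.toReal_ofReal (condPendProb_nonneg hF _ _ _),
    ENNReal.toReal_zero] at hreal
  exact (Filter.tendsto_add_atTop_iff_nat 1).1 hreal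

lemma exists_histProb_pos_pendingCount_eq_zero (hF : ∀ i, ValidProtocol (F i))
    (hfin : ∀ i, condLatency F [] i ≠ ⊤) : ∃ l, 0 < histProb F l ∧ pendingCount l = 0 := by
  have hsum : Filter.Tendsto (fun s => ∑ i, condPendProb F [] i s) Filter.atTop (𝓝 0) := by
    simpa using tendsto_finsetSum univ fun i _ => tendsto_condPendProb hF (hfin i)
  obtain ⟨s, hs⟩ := (hsum.eventually (gt_mem_nhds one_pos)).exists
  rw [sum_condPendProb] at hs
  obtain ⟨e, hpos, hzero⟩ := exists_pos_eq_zero_of_sum_mul_lt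
    (fun e => contProb_nonneg hF _ _) (sum_contProb_ofFn F [] s) hs
  exact ⟨List.ofFn e, hpos, by simpa using hzero⟩

lemma exists_sole_pending (hF : ∀ i, ValidProtocol (F i)) (hn : 1 ≤ n)
    (hfin : ∀ i, condLatency F [] i ≠ ⊤) :
    ∃ h i, 0 < histProb F h ∧ pending h i ∧ ∀ j ≠ i, ¬ pending h j := by
  obtain ⟨l, hpos, hl⟩ := exists_histProb_pos_pendingCount_eq_zero hF hfin
  obtain ⟨m, hm⟩ := exists_take_pendingCount_eq_one hn hl
  obtain ⟨i, hi⟩ := card_eq_one.1 hm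
  have hpend : ∀ j, pending (l.take m) j ↔ j = i := fun j => by
    simpa using Finset.ext_iff.1 hi j
  exact ⟨l.take m, i, histProb_take_pos hF hpos m, (hpend i).2 rfl,
    fun j hj hjp => hj ((hpend j).1 hjp)⟩

lemma stepProb_ne_zero_of_histProb_pos {h : Hist n} (hpos : 0 < histProb F h) {k : ℕ}
    {v : Fin n → Bool} (hk : h[k]? = some v) : stepProb F (h.take k) v ≠ 0 := by
  have hlt : k < h.length := (List.getElem?_eq_some_iff.1 hk).1
  have := prod_ne_zero_iff.1 (show contProb F [] h ≠ 0 from hpos.ne') k (mem_range.2 hlt)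
  simpa [List.getD_eq_getElem?_getD, hk] using this

/-- A player still pending after `h` stayed quiet in every slot of `h` in which another player
succeeded, which has positive probability only if she was not bound to transmit. -/
lemma lt_one_of_alone (hF : ∀ i, ValidProtocol (F i)) {h : Hist n} (hpos : 0 < histProb F h)
    {i j : Fin n} (hi : pending h i) (hij : i ≠ j) {k : ℕ} {v : Fin n → Bool}
    (hk : h[k]? = some v) (hv : alone v j) : F i (personal (h.take k) i) < 1 := by
  have hik : pending (h.take k) i := pending_of_append (by rwa [List.take_append_drop])
  have hfactor := prod_ne_zero_iff.1 (stepProb_ne_zero_of_histProb_pos hpos hk) i (mem_univ i)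
  simp only [hik, hv.2 i hij, if_true, Bool.false_eq_true, if_false] at hfactor
  exact lt_of_le_of_ne (hF i _).2 fun h1 => hfactor (by rw [h1, sub_self])

def successIndex (h : Hist n) (j : Fin n) : ℕ := h.findIdx fun v => decide (alone v j)

lemma getElem?_successIndex {h : Hist n} {j : Fin n} (hj : ¬ pending h j) :
    ∃ v, h[successIndex h j]? = some v ∧ alone v j := by
  simp only [pending, not_forall, not_not] at hj
  obtain ⟨v, hv, hvj⟩ := hj
  have hlt : successIndex h j < h.length :=
    List.findIdx_lt_length_of_exists ⟨v, hv, decide_eq_true hvj⟩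
  exact ⟨_, List.getElem?_eq_getElem hlt, of_decide_eq_true (List.findIdx_getElem (w := hlt))⟩

lemma successIndex_injOn (h : Hist n) : Set.InjOn (successIndex h) {j | ¬ pending h j} := by
  intro a ha b hb hab
  obtain ⟨v, hv, hva⟩ := getElem?_successIndex ha
  obtain ⟨w, hw, hwb⟩ := getElem?_successIndex hb
  rw [hab, hw, Option.some_inj] at hv
  exact hva.unique (hv ▸ hwb)

lemma exists_slots_apply_lt_one (hF : ∀ i, ValidProtocol (F i)) {h : Hist n} (hpos : 0 < histProb F h)
    {i : Fin n} (hpend : pending h i) (hothers : ∀ j ≠ i, ¬ pending h j) :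
    ∃ T : Finset ℕ, #T = n - 1 ∧ ∀ k ∈ T, k < h.length ∧ F i (personal (h.take k) i) < 1 := by
  refine ⟨(univ.erase i).image (successIndex h), ?_, ?_⟩
  · rw [card_image_of_injOn, card_erase_of_mem (mem_univ i), card_univ, Fintype.card_fin]
    exact (successIndex_injOn h).mono fun j hj => hothers j (ne_of_mem_erase hj)
  · intro k hk
    obtain ⟨j, hj, rfl⟩ := mem_image.1 hk
    obtain ⟨v, hv, hvj⟩ := getElem?_successIndex (hothers j (ne_of_mem_erase hj))
    exact ⟨(List.getElem?_eq_some_iff.1 hv).1,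
      lt_one_of_alone hF hpos hpend (ne_of_mem_erase hj).symm hv hvj⟩

end Probabilities

section Slots

variable {p : ℕ → ℝ}

lemma exists_first_eq_one_after (hp : ∀ t, 1 ≤ t → p t ≤ 1) {M D : ℕ} (hM : p M < 1)
    (hMD : M < D) (hD : p D = 1) : ∃ τ, M < τ ∧ p τ = 1 ∧ p (τ - 1) < 1 := by
  classical
  have hex : ∃ u, M < u ∧ p u = 1 := ⟨D, hMD, hD⟩
  obtain ⟨hMτ, hτ⟩ := Nat.find_spec hex
  refine ⟨Nat.find hex, hMτ, hτ, ?_⟩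
  rcases (Nat.le_sub_one_of_lt hMτ).eq_or_lt with hprev | hprev
  · rwa [← hprev]
  · exact (hp _ (by omega)).lt_of_ne fun h1 => Nat.find_min hex (by omega) ⟨hprev, h1⟩

-- `T` and `D` are 0-based indices: index `k` is slot `k + 1`.
lemma exists_blocking_slot (hp : ∀ t, 1 ≤ t → p t ≤ 1) {T : Finset ℕ} {m D : ℕ} (hT : #T = m)
    (hm : 1 ≤ m) (hTD : ∀ k ∈ T, k < D ∧ p (k + 1) < 1) (hD : p (D + 1) = 1) :
    ∃ τ, 2 ≤ τ ∧ p τ = 1 ∧ p (τ - 1) < 1 ∧ ∃ ts : Fin m → ℕ, StrictMono ts ∧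
      ∀ j, 1 ≤ ts j ∧ ts j < τ ∧ p (ts j) < 1 := by
  have hne : T.Nonempty := card_pos.1 (by omega)
  obtain ⟨hlast, hlast_lt⟩ := hTD _ (T.max'_mem hne)
  obtain ⟨τ, hτ, hpτ, hprev⟩ :=
    exists_first_eq_one_after hp hlast_lt (Nat.succ_lt_succ hlast) hD
  refine ⟨τ, by omega, hpτ, hprev, fun j => T.orderEmbOfFin hT j + 1,
    (T.orderEmbOfFin hT).strictMono.add_const 1, fun j => ?_⟩
  have hmem := T.orderEmbOfFin_mem hT j
  dsimp only
  exact ⟨by omega, by have := T.le_max' _ hmem; omega, (hTD _ hmem).2⟩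

end Slots

/-- If an anonymous age-based acknowledgment-based protocol `p` for
`n ≥ 2` players is in equilibrium and gives every player finite expected latency, then
there is a finite positive integer `τ` with (a) `p τ = 1`, (b) `p (τ − 1) < 1`, and
(c) there are slots `τ₁ < ⋯ < τ_{n−1} < τ` with `p τⱼ < 1` for all `j`. -/
theorem age_based_equilibrium_blocking_slot :
    ∀ (n : ℕ) (p : ℕ → ℝ), 2 ≤ n →
      (∀ t : ℕ, 1 ≤ t → 0 ≤ p t ∧ p t ≤ 1) →
      IsEquilibrium (fun _ : Fin n => ageProtocol p) →
      (∀ i : Fin n, condLatency (fun _ : Fin n => ageProtocol p) [] i < ⊤) →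
      ∃ τ : ℕ, 2 ≤ τ ∧ p τ = 1 ∧ p (τ - 1) < 1 ∧
        ∃ ts : Fin (n - 1) → ℕ, StrictMono ts ∧
          ∀ j : Fin (n - 1), 1 ≤ ts j ∧ ts j < τ ∧ p (ts j) < 1 := by
  intro n p hn hp hEq hfin
  have hF : ∀ i : Fin n, ValidProtocol (ageProtocol p) := fun _ l => hp _ (by omega)
  obtain ⟨h, i, hpos, hpend, hothers⟩ := exists_sole_pending hF (by omega) fun i => (hfin i).ne
  have hdeadline : p (h.length + 1) = 1 := by
    simpa [ageProtocol, personal] using apply_eq_one_of_sole_pending hF hEq hpos hpend hothers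
  obtain ⟨T, hT, hslots⟩ := exists_slots_apply_lt_one hF hpos hpend hothers
  refine exists_blocking_slot (fun t ht => (hp t ht).2) hT (by omega) (fun k hk => ?_) hdeadline
  obtain ⟨hk, hlt⟩ := hslots k hk
  exact ⟨hk, by simpa [ageProtocol, personal, hk.le] using hlt⟩

end Contention
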